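/- For every natural number n, the number of possible positions of an n-step simple random walk on Z^4 is |P_n^4| = (1/3)n^4 + (4/3)n^3 + (8/3)n^2 + (8/3)n + 1. -/

import Mathlib

/-!
For `d ≥ 1` the reachable set `P d n` is the set of lattice points `x` with `‖x‖₁ ≤ n` and
`‖x‖₁ ≡ n [MOD 2]`: a step changes `‖x‖₁` by `±1`, and conversely every such `x ≠ 0` is one
step away from a point of the same kind for `n - 1` (move one nonzero coordinate toward `0`),
while for `x = 0` one steps back from a unit vector. Slicing along the first coordinate, the
number `N d n = #(parityBall d n)` of such points satisfies
`N (d+1) n = N d n + 2 ∑_{j<n} N d j`, hence `N (d+1) (n+1) = N (d+1) n + N d (n+1) + N d n`;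
starting from `N 0 n = [n even]` this recursion gives `n + 1`, `(n + 1)²`,
`(2n³ + 6n² + 7n + 3)/3` and finally the quartic for `d = 4`.

In `parityBall` the parity condition reads `Even (n + ∑ i, x i)`, which is the same because
`|a| ≡ a [ZMOD 2]`.
-/

open Finset

/-- The set of positions in `ℤ^d` reachable from the origin in exactly `n` steps,
each step being a standard unit vector or its negative. -/
def P (d n : ℕ) : Set (Fin d → ℤ) :=
  {x | ∃ f : Fin n → Fin d → ℤ,
    (∀ i, ∃ j : Fin d, f i = Pi.single j 1 ∨ f i = Pi.single j (-1)) ∧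
    x = ∑ i, f i}

lemma abs_le_sum_abs {ι G : Type*} [Fintype ι] [AddCommGroup G] [LinearOrder G]
    [IsOrderedAddMonoid G] (x : ι → G) (j : ι) : |x j| ≤ ∑ i, |x i| :=
  single_le_sum (fun i _ => abs_nonneg (x i)) (mem_univ j)

lemma sum_comp_add_single {ι R M : Type*} [Fintype ι] [DecidableEq ι] [AddZeroClass R]
    [AddCommGroup M] (g : R → M) (x : ι → R) (j : ι) (c : R) :
    ∑ i, g ((x + Pi.single j c : ι → R) i) = ∑ i, g (x i) - g (x j) + g (x j + c) := by
  rw [← add_sum_erase _ _ (mem_univ j), ← add_sum_erase _ (fun i => g (x i)) (mem_univ j),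
    sum_congr rfl fun i hi => by
      rw [Pi.add_apply, Pi.single_eq_of_ne (ne_of_mem_erase hi), add_zero]]
  simp only [Pi.add_apply, Pi.single_eq_same]
  abel

lemma sum_Icc_neg_comp_natAbs {M : Type*} [AddCommMonoid M] (f : ℕ → M) (n : ℕ) :
    ∑ k ∈ Icc (-(n : ℤ)) n, f k.natAbs = f 0 + 2 • ∑ j ∈ range n, f (j + 1) := by
  induction n with
  | zero => simp
  | succ n ih =>
    have hIcc : Icc (-((n + 1 : ℕ) : ℤ)) (n + 1 : ℕ) =
        insert (-((n + 1 : ℕ) : ℤ)) (insert ((n + 1 : ℕ) : ℤ) (Icc (-(n : ℤ)) n)) := by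
      ext k; simp only [mem_Icc, mem_insert]; omega
    rw [hIcc, sum_insert (by simp only [mem_insert, mem_Icc]; omega),
      sum_insert (by simp only [mem_Icc]; omega), ih, sum_range_succ, smul_add,
      Int.natAbs_neg, Int.natAbs_natCast]
    abel

lemma mem_P_zero {d : ℕ} {x : Fin d → ℤ} : x ∈ P d 0 ↔ x = 0 := by
  simp [P]

lemma mem_P_succ {d n : ℕ} {x : Fin d → ℤ} :
    x ∈ P d (n + 1) ↔
      ∃ y ∈ P d n, ∃ j c, (c = 1 ∨ c = -1) ∧ x = y + Pi.single j c := by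
  constructor
  · rintro ⟨f, hf, rfl⟩
    obtain ⟨j, hj⟩ := hf 0
    refine ⟨∑ i : Fin n, f i.succ, ⟨_, fun i => hf i.succ, rfl⟩, j, ?_⟩
    rw [Fin.sum_univ_succ, add_comm]
    rcases hj with h | h
    · exact ⟨1, Or.inl rfl, by rw [h]⟩
    · exact ⟨-1, Or.inr rfl, by rw [h]⟩
  · rintro ⟨_, ⟨f, hf, rfl⟩, j, c, hc, rfl⟩
    refine ⟨Fin.cons (Pi.single j c) f, fun i => Fin.cases ⟨j, ?_⟩ hf i, ?_⟩
    · simp [Fin.sum_univ_succ, add_comm]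
    · rcases hc with rfl | rfl <;> simp

noncomputable def parityBall (d n : ℕ) : Finset (Fin d → ℤ) :=
  (Fintype.piFinset fun _ => Icc (-(n : ℤ)) n).filter
    fun x => ∑ i, |x i| ≤ n ∧ Even ((n : ℤ) + ∑ i, x i)

lemma mem_parityBall {d n : ℕ} {x : Fin d → ℤ} :
    x ∈ parityBall d n ↔ ∑ i, |x i| ≤ n ∧ Even ((n : ℤ) + ∑ i, x i) := by
  refine mem_filter.trans (and_iff_right_of_imp fun h => Fintype.mem_piFinset.2 fun j => ?_)
  exact mem_Icc.2 (abs_le.1 ((abs_le_sum_abs x j).trans h.1))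

lemma mem_parityBall_zero {d : ℕ} {x : Fin d → ℤ} : x ∈ parityBall d 0 ↔ x = 0 := by
  rw [mem_parityBall, funext_iff]
  constructor
  · rintro ⟨h, -⟩ j
    exact abs_nonpos_iff.1 ((abs_le_sum_abs x j).trans (by exact_mod_cast h))
  · rintro h
    simp [h]

lemma add_single_mem_parityBall_iff {d n : ℕ} {y : Fin d → ℤ} (j : Fin d) (c : ℤ) :
    y + Pi.single j c ∈ parityBall d n ↔
      ∑ i, |y i| - |y j| + |y j + c| ≤ n ∧ Even ((n : ℤ) + ∑ i, y i + c) := by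
  have hsum : ∑ i, (y + Pi.single j c : Fin d → ℤ) i = ∑ i, y i + c :=
    (sum_comp_add_single id y j c).trans (by simp only [id]; ring)
  rw [mem_parityBall, sum_comp_add_single, hsum, add_assoc]

lemma add_single_mem_parityBall {d n : ℕ} {y : Fin d → ℤ} (hy : y ∈ parityBall d n)
    (j : Fin d) {c : ℤ} (hc : c = 1 ∨ c = -1) : y + Pi.single j c ∈ parityBall d (n + 1) := by
  rw [mem_parityBall] at hy
  rw [add_single_mem_parityBall_iff]
  simp only [Int.even_iff, Int.abs_eq_natAbs] at hy ⊢
  omega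

lemma exists_add_single_of_mem_parityBall {d n : ℕ} (hd : 0 < d) {x : Fin d → ℤ}
    (hx : x ∈ parityBall d (n + 1)) :
    ∃ y ∈ parityBall d n, ∃ j c, (c = 1 ∨ c = -1) ∧ x = y + Pi.single j c := by
  by_cases hx0 : x = 0
  · subst hx0
    obtain ⟨-, hn⟩ := mem_parityBall.1 hx
    refine ⟨Pi.single ⟨0, hd⟩ 1, ?_, ⟨0, hd⟩, -1, Or.inr rfl, by rw [← Pi.single_add]; simp⟩
    have h := (add_single_mem_parityBall_iff (n := n) (y := 0) ⟨0, hd⟩ 1).2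
    simp only [Nat.cast_add, Nat.cast_one, Pi.zero_apply, sum_const_zero, add_zero, even_add_one,
      Int.odd_coe_nat, abs_zero, sub_self, zero_add, abs_one, Nat.one_le_cast, and_imp] at hn h
    exact h hn.pos hn
  · obtain ⟨j, hj⟩ : ∃ j, x j ≠ 0 := by simpa [funext_iff] using hx0
    obtain ⟨c, hc, habs⟩ : ∃ c : ℤ, (c = 1 ∨ c = -1) ∧ |x j + -c| = |x j| - 1 := by
      rcases hj.lt_or_gt with h | h
      · exact ⟨-1, Or.inr rfl, by rw [Int.abs_eq_natAbs, Int.abs_eq_natAbs]; omega⟩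
      · exact ⟨1, Or.inl rfl, by rw [Int.abs_eq_natAbs, Int.abs_eq_natAbs]; omega⟩
    refine ⟨x + Pi.single j (-c), ?_, j, c, hc, by rw [add_assoc, ← Pi.single_add]; simp⟩
    rw [mem_parityBall] at hx
    rw [add_single_mem_parityBall_iff, habs]
    simp only [Int.even_iff] at hx ⊢
    omega

theorem P_eq_parityBall {d : ℕ} (hd : 0 < d) (n : ℕ) : P d n = parityBall d n := by
  induction n with
  | zero => ext x; simp [mem_P_zero, mem_parityBall_zero]
  | succ n ih =>
    ext x
    simp only [mem_P_succ, ih, mem_coe]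
    constructor
    · rintro ⟨y, hy, j, c, hc, rfl⟩
      exact add_single_mem_parityBall hy j hc
    · exact exists_add_single_of_mem_parityBall hd

lemma cons_mem_parityBall {d n : ℕ} (k : ℤ) (y : Fin d → ℤ) :
    (Fin.cons k y : Fin (d + 1) → ℤ) ∈ parityBall (d + 1) n ↔
      k.natAbs ≤ n ∧ y ∈ parityBall d (n - k.natAbs) := by
  have hy : 0 ≤ ∑ i, |y i| := sum_nonneg fun i _ => abs_nonneg (y i)
  simp only [mem_parityBall, Fin.sum_univ_succ, Fin.cons_zero, Fin.cons_succ, Int.even_iff,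
    Int.abs_eq_natAbs] at hy ⊢
  omega

lemma card_parityBall_succ_left_eq_sum (d n : ℕ) :
    #(parityBall (d + 1) n) = ∑ k ∈ Icc (-(n : ℤ)) n, #(parityBall d (n - k.natAbs)) := by
  rw [card_eq_sum_card_fiberwise (f := fun x => x 0) fun x hx => ?_]
  · refine sum_congr rfl fun k hk => card_nbij' Fin.tail (Fin.cons (α := fun _ => ℤ) k)
      ?_ ?_ ?_ ?_
    · intro x hx
      obtain ⟨hx, rfl⟩ := mem_filter.1 hx
      exact ((cons_mem_parityBall (x 0) (Fin.tail x)).1 (by rwa [Fin.cons_self_tail])).2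
    · intro y hy
      have hk : k.natAbs ≤ n := by rw [mem_Icc] at hk; omega
      exact mem_filter.2
        ⟨(cons_mem_parityBall k y).2 ⟨hk, hy⟩, Fin.cons_zero (α := fun _ => ℤ) k y⟩
    · intro x hx
      rw [← (mem_filter.1 hx).2]
      exact Fin.cons_self_tail x
    · intro y _
      exact Fin.tail_cons (α := fun _ => ℤ) k y
  · rw [mem_coe, ← Fin.cons_self_tail x, cons_mem_parityBall] at hx
    simp only [coe_Icc, Set.mem_Icc]
    omega

lemma card_parityBall_succ_left (d n : ℕ) :
    #(parityBall (d + 1) n) = #(parityBall d n) + 2 * ∑ j ∈ range n, #(parityBall d j) := by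
  rw [card_parityBall_succ_left_eq_sum, sum_Icc_neg_comp_natAbs (fun m => #(parityBall d (n - m))),
    ← sum_range_reflect, smul_eq_mul, Nat.sub_zero]
  congr 2
  refine sum_congr rfl fun j hj => ?_
  rw [mem_range] at hj
  congr 2
  omega

lemma card_parityBall_succ_succ (d n : ℕ) :
    #(parityBall (d + 1) (n + 1)) =
      #(parityBall (d + 1) n) + #(parityBall d (n + 1)) + #(parityBall d n) := by
  rw [card_parityBall_succ_left, card_parityBall_succ_left, sum_range_succ]
  ring

lemma card_parityBall_zero_right (d : ℕ) : #(parityBall d 0) = 1 :=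
  card_eq_one.2 ⟨0, by ext x; simp [mem_parityBall_zero]⟩

lemma card_parityBall_zero_left (n : ℕ) : #(parityBall 0 n) = if Even n then 1 else 0 := by
  have h (x : Fin 0 → ℤ) : x ∈ parityBall 0 n ↔ Even n := by simp [mem_parityBall]
  split_ifs with hn
  · exact card_eq_one.2 ⟨0, eq_singleton_iff_unique_mem.2
      ⟨(h 0).2 hn, fun x _ => Subsingleton.elim x 0⟩⟩
  · exact card_eq_zero.2 (eq_empty_of_forall_notMem fun x hx => hn ((h x).1 hx))

lemma card_parityBall_one (n : ℕ) : #(parityBall 1 n) = n + 1 := by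
  induction n with
  | zero => exact card_parityBall_zero_right 1
  | succ n ih =>
    rw [card_parityBall_succ_succ, ih, card_parityBall_zero_left, card_parityBall_zero_left]
    simp only [Nat.even_add_one]
    split_ifs <;> omega

lemma card_parityBall_two (n : ℕ) : #(parityBall 2 n) = (n + 1) ^ 2 := by
  induction n with
  | zero => exact card_parityBall_zero_right 2
  | succ n ih =>
    rw [card_parityBall_succ_succ, ih, card_parityBall_one, card_parityBall_one]
    ring

lemma card_parityBall_three (n : ℕ) :
    (#(parityBall 3 n) : ℚ) = (2 * n ^ 3 + 6 * n ^ 2 + 7 * n + 3) / 3 := by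
  induction n with
  | zero => simp [card_parityBall_zero_right]
  | succ n ih =>
    rw [card_parityBall_succ_succ]
    push_cast [ih, card_parityBall_two]
    ring

lemma card_parityBall_four (n : ℕ) :
    (#(parityBall 4 n) : ℚ) =
      (1 / 3) * n ^ 4 + (4 / 3) * n ^ 3 + (8 / 3) * n ^ 2 + (8 / 3) * n + 1 := by
  induction n with
  | zero => simp [card_parityBall_zero_right]
  | succ n ih =>
    rw [card_parityBall_succ_succ]
    push_cast [ih, card_parityBall_three]
    ring

theorem stmt_4 (n : ℕ) :
    (Nat.card (P 4 n) : ℚ) =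
      (1 / 3) * n ^ 4 + (4 / 3) * n ^ 3 + (8 / 3) * n ^ 2 + (8 / 3) * n + 1 := by
  rw [P_eq_parityBall (by norm_num), Nat.card_coe_set_eq, Set.ncard_coe_finset,
    card_parityBall_four]
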